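/- Let G be a finite abelian group with an element c of order 2. Suppose 0 → P → Q → A → 0 is a short exact sequence of Z[G]₋-modules with P and Q projective over Z[G]₋ and A finitely generated and Z-torsion-free. Then A is a projective Z[G]₋-module. -/

import Mathlib

/-!
Statement 8: Let `G` be a finite abelian group with `c` of order 2 and
`Λ = ℤ[G]₋ = ℤ[G]/(1+c)`.  If `0 → P → Q → A → 0` is a short exact sequence of
`Λ`-modules with `P`, `Q` projective and `A` finitely generated and `ℤ`-torsion-free,
then `A` is a projective `Λ`-module.
-/

noncomputable section

def negGroupRing (G : Type*) [CommGroup G] (c : G) : Type _ :=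
  MonoidAlgebra ℤ G ⧸ (Ideal.span {1 + MonoidAlgebra.of ℤ G c} : Ideal (MonoidAlgebra ℤ G))

instance (G : Type*) [CommGroup G] (c : G) : CommRing (negGroupRing G c) := by
  unfold negGroupRing; infer_instance

namespace NegAux

variable {G : Type*} [CommGroup G] (c : G)

def nIdeal : Ideal (MonoidAlgebra ℤ G) := Ideal.span {1 + MonoidAlgebra.of ℤ G c}

def nmk : MonoidAlgebra ℤ G →+* negGroupRing G c := Ideal.Quotient.mk (nIdeal c)

lemma nmk_surjective : Function.Surjective (nmk (G := G) c) :=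
  Ideal.Quotient.mk_surjective

def uu : G → negGroupRing G c := fun t => nmk c (MonoidAlgebra.of ℤ G t)

lemma uu_mul (s t : G) : uu c (s * t) = uu c s * uu c t := by
  rw [uu, uu, uu, ← map_mul]
  congr 1
  show MonoidAlgebra.single (s*t) (1:ℤ) = MonoidAlgebra.single s 1 * MonoidAlgebra.single t 1
  rw [MonoidAlgebra.single_mul_single, one_mul]

lemma uu_one : uu c (1 : G) = 1 := by
  rw [uu]
  show nmk c (1 : MonoidAlgebra ℤ G) = 1
  exact map_one _

lemma uu_c : uu c c = -1 := by
  have h : nmk (G := G) c (1 + MonoidAlgebra.of ℤ G c) = 0 := by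
    apply Ideal.Quotient.eq_zero_iff_mem.mpr
    exact Ideal.subset_span rfl
  have := h
  rw [map_add, map_one] at this
  have : (1 : negGroupRing G c) + uu c c = 0 := this
  linear_combination this

lemma uu_inv_mul (t : G) : uu c t⁻¹ * uu c t = 1 := by
  rw [← uu_mul, inv_mul_cancel, uu_one]

end NegAux

namespace Test2
open NegAux
variable {G : Type*} [CommGroup G] (c : G)

/-- coefficient functional: coeff at 1 minus coeff at c -/
def ηf : MonoidAlgebra ℤ G →+ ℤ :=
  AddMonoidHom.mk' (fun x => x.coeff 1 - x.coeff c) (by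
    intro x y
    show (x + y).coeff 1 - (x + y).coeff c = _
    rw [MonoidAlgebra.coeff_add, Finsupp.add_apply, Finsupp.add_apply]
    ring)

lemma ηf_apply (x : MonoidAlgebra ℤ G) : ηf c x = x.coeff 1 - x.coeff c := rfl

open scoped Classical in
lemma ηf_single (t : G) (b : ℤ) :
    ηf c (MonoidAlgebra.single t b) = (if t = 1 then b else 0) - (if t = c then b else 0) := by
  rw [ηf_apply]
  rw [show (MonoidAlgebra.single t b : MonoidAlgebra ℤ G).coeff = Finsupp.single t b from rfl]
  rw [Finsupp.single_apply, Finsupp.single_apply]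

lemma ηf_ideal (hc : c * c = 1) : ∀ x ∈ nIdeal c, ηf c x = 0 := by
  intro x hx
  rw [nIdeal, Ideal.mem_span_singleton'] at hx
  obtain ⟨r, rfl⟩ := hx
  have hcinv : c⁻¹ = c := inv_eq_of_mul_eq_one_right hc
  have h1 : (r * (1 + MonoidAlgebra.of ℤ G c)) = r + r * MonoidAlgebra.of ℤ G c := by ring
  rw [h1, map_add]
  have h2 : ηf c (r * MonoidAlgebra.of ℤ G c) = r.coeff c - r.coeff 1 := by
    rw [ηf_apply, MonoidAlgebra.of_apply, MonoidAlgebra.coeff_mul_single_apply,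
      MonoidAlgebra.coeff_mul_single_apply, hcinv, hc, one_mul, mul_one, mul_one]
  have h3 : ηf c r = r.coeff 1 - r.coeff c := ηf_apply c r
  rw [h2, h3]; ring

/-- the "coefficient at the identity coset" map Λ → Λ -/
def ζf (hc : c * c = 1) : negGroupRing G c → negGroupRing G c := fun μ =>
  Quotient.liftOn' μ (fun x => (ηf c x) • (1 : negGroupRing G c)) (by
    intro x y hxy
    have h : x - y ∈ nIdeal c := (Submodule.quotientRel_def _).mp hxy
    have : ηf c (x - y) = 0 := ηf_ideal c hc _ h
    rw [map_sub] at this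
    have hxy2 : ηf c x = ηf c y := by omega
    simp [hxy2])

lemma ζf_mk (hc : c * c = 1) (x : MonoidAlgebra ℤ G) :
    ζf c hc (nmk c x) = (ηf c x) • 1 := rfl


lemma ζf_add (hc : c * c = 1) (μ ν : negGroupRing G c) :
    ζf c hc (μ + ν) = ζf c hc μ + ζf c hc ν := by
  obtain ⟨x, rfl⟩ := nmk_surjective c μ
  obtain ⟨y, rfl⟩ := nmk_surjective c ν
  rw [← map_add, ζf_mk, ζf_mk, ζf_mk, map_add, add_smul]

/-- ζ as an additive monoid hom -/
def ζA (hc : c * c = 1) : negGroupRing G c →+ negGroupRing G c :=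
  AddMonoidHom.mk' (ζf c hc) (ζf_add c hc)

lemma ζf_zero (hc : c * c = 1) : ζf c hc 0 = 0 := (ζA c hc).map_zero

lemma ζf_neg (hc : c * c = 1) (μ : negGroupRing G c) : ζf c hc (-μ) = - ζf c hc μ :=
  (ζA c hc).map_neg μ

open scoped Classical in
lemma ζf_uu (hc : c * c = 1) (hc1 : c ≠ 1) (s : G) :
    ζf c hc (uu c s) = if s = 1 then 1 else if s = c then -1 else 0 := by
  rw [show uu c s = nmk c (MonoidAlgebra.single s 1) from rfl, ζf_mk, ηf_single]
  by_cases h1 : s = 1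
  · subst h1
    have h2 : (1:G) ≠ c := fun h => hc1 h.symm
    rw [if_pos rfl, if_pos rfl, if_neg h2]
    norm_num
  · by_cases h2 : s = c
    · rw [if_neg h1, if_pos h2, if_neg h1, if_pos h2]
      norm_num
    · rw [if_neg h1, if_neg h2, if_neg h1, if_neg h2]
      norm_num

lemma mem_zpowers_eq (hc : c * c = 1) {h : G} (hh : h ∈ Subgroup.zpowers c) :
    h = 1 ∨ h = c := by
  obtain ⟨n, rfl⟩ := hh
  have hsq : c ^ (2:ℤ) = 1 := by
    rw [show (2:ℤ) = 1 + 1 from rfl, zpow_add, zpow_one, hc]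
  rcases Int.even_or_odd n with ⟨k, hk⟩ | ⟨k, hk⟩
  · left
    show c ^ n = 1
    rw [hk, show k + k = 2 * k by ring, zpow_mul, hsq, one_zpow]
  · right
    show c ^ n = c
    rw [hk, zpow_add, zpow_mul, hsq, one_zpow, one_mul, zpow_one]


open scoped Classical in
lemma KSI [Fintype G] [Fintype (G ⧸ Subgroup.zpowers c)] (hc : c * c = 1) (hc1 : c ≠ 1)
    (r : G ⧸ Subgroup.zpowers c → G)
    (hr : ∀ q, (QuotientGroup.mk (r q) : G ⧸ Subgroup.zpowers c) = q)
    (μ : negGroupRing G c) :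
    ∑ q : G ⧸ Subgroup.zpowers c, uu c (r q) * ζf c hc (uu c (r q)⁻¹ * μ) = μ := by
  -- bundle LHS as an additive hom in μ
  set T : negGroupRing G c →+ negGroupRing G c :=
    ∑ q : G ⧸ Subgroup.zpowers c,
      (AddMonoidHom.mulLeft (uu c (r q))).comp
        ((ζA c hc).comp (AddMonoidHom.mulLeft (uu c (r q)⁻¹))) with hT
  have hTapp : ∀ ν, T ν = ∑ q : G ⧸ Subgroup.zpowers c,
      uu c (r q) * ζf c hc (uu c (r q)⁻¹ * ν) := by
    intro ν
    rw [hT, AddMonoidHom.finset_sum_apply]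
    rfl
  rw [← hTapp]
  -- generators
  have key : ∀ t₀ : G, T (uu c t₀) = uu c t₀ := by
    intro t₀
    rw [hTapp]
    rw [Finset.sum_eq_single (QuotientGroup.mk (s := Subgroup.zpowers c) t₀)]
    · have hmem : (r (QuotientGroup.mk t₀))⁻¹ * t₀ ∈ Subgroup.zpowers c := by
        rw [← QuotientGroup.eq]
        exact hr _
      rcases mem_zpowers_eq c hc hmem with h1 | h1
      · rw [← uu_mul, h1, ζf_uu c hc hc1, if_pos rfl, mul_one, inv_mul_eq_one.mp h1]
      · have htt : r (QuotientGroup.mk t₀) * ((r (QuotientGroup.mk t₀))⁻¹ * t₀)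
            = r (QuotientGroup.mk t₀) * c := by rw [h1]
        rw [mul_inv_cancel_left] at htt
        rw [← uu_mul, h1, ζf_uu c hc hc1, if_neg hc1, if_pos rfl]
        conv_rhs => rw [htt]
        rw [uu_mul, uu_c]
    · intro q _ hq
      have hA : (r q)⁻¹ * t₀ ≠ 1 := by
        intro h
        exact hq (by rw [← hr q, inv_mul_eq_one.mp h])
      have hB : (r q)⁻¹ * t₀ ≠ c := by
        intro h
        refine hq ?_
        rw [← hr q]
        exact (QuotientGroup.eq).mpr (h ▸ Subgroup.mem_zpowers c)
      rw [← uu_mul, ζf_uu c hc hc1, if_neg hA, if_neg hB, mul_zero]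
    · intro h
      exact absurd (Finset.mem_univ _) h
  -- conclude by additive induction
  obtain ⟨x, rfl⟩ := nmk_surjective c μ
  induction x using MonoidAlgebra.induction_linear with
  | zero => rw [map_zero, map_zero]
  | add f g hf hg => rw [map_add, map_add, hf, hg]
  | single t b =>
      have hsb : (MonoidAlgebra.single t b : MonoidAlgebra ℤ G) = b • MonoidAlgebra.single t 1 := by
        rw [MonoidAlgebra.smul_single, smul_eq_mul, mul_one]
      rw [hsb, map_zsmul, map_zsmul,
        show (nmk c (MonoidAlgebra.single t 1) : negGroupRing G c) = uu c t from rfl, key]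


section MainSplit

variable {G : Type*} [CommGroup G] [Fintype G] (c : G)

lemma uu_smul_inv_smul {M : Type*} [AddCommGroup M] [Module (negGroupRing G c) M]
    (x : G) (m : M) : uu c x • uu c x⁻¹ • m = m := by
  rw [smul_smul, ← uu_mul, mul_inv_cancel, uu_one, one_smul]

lemma uu_inv_smul_smul {M : Type*} [AddCommGroup M] [Module (negGroupRing G c) M]
    (x : G) (m : M) : uu c x⁻¹ • uu c x • m = m := by
  rw [smul_smul, ← uu_mul, inv_mul_cancel, uu_one, one_smul]

lemma uu_mul_c (t : G) : uu c (t * c) = - uu c t := by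
  rw [uu_mul, uu_c, mul_neg, mul_one]

lemma uu_inv_mul_c (hc : c * c = 1) (t : G) : uu c ((t * c)⁻¹) = - uu c t⁻¹ := by
  rw [mul_inv_rev, inv_eq_of_mul_eq_one_right hc, mul_comm, uu_mul_c]

set_option maxHeartbeats 1000000 in
theorem main_split (hc : c * c = 1) (hc1 : c ≠ 1)
    {Q A : Type*} [AddCommGroup Q] [AddCommGroup A]
    [Module (negGroupRing G c) Q] [Module (negGroupRing G c) A]
    (g : Q →ₗ[negGroupRing G c] A)
    (hproj : Module.Projective (negGroupRing G c) (LinearMap.ker g))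
    (σ : A →+ Q) (hσ : ∀ a, g (σ a) = a) :
    ∃ s : A →ₗ[negGroupRing G c] Q, ∀ a, g (s a) = a := by
  classical
  letI : Fintype (G ⧸ Subgroup.zpowers c) := Fintype.ofFinite _
  set Λ := negGroupRing G c with hΛ
  set K := LinearMap.ker g with hK
  obtain ⟨ι, hι⟩ := (Module.projective_def.mp hproj)
  set ρ : (K →₀ Λ) →ₗ[Λ] K := Finsupp.linearCombination Λ id with hρ
  -- the twisted difference cocycle, valued in Q
  set φ : G → A → Q := fun t a => uu c t • σ (uu c t⁻¹ • a) - σ a with hφ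
  have hφK : ∀ t a, φ t a ∈ K := by
    intro t a
    rw [hK, LinearMap.mem_ker, hφ]
    simp only [map_sub, map_smul, hσ, smul_smul, ← uu_mul, mul_inv_cancel, inv_mul_cancel,
      uu_one, one_smul, sub_self]
  set φK : G → A → K := fun t a => ⟨φ t a, hφK t a⟩ with hφK'
  set χ : G → A → (K →₀ Λ) := fun t a => ι (φK t a) with hχ
  set E : (K →₀ Λ) → (K →₀ Λ) := Finsupp.mapRange (ζf c hc) (ζf_zero c hc) with hE
  set D : G → (K →₀ Λ) → (K →₀ Λ) := fun t v => uu c t • E (uu c t⁻¹ • v) with hD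
  set ψ : A → (K →₀ Λ) := fun a => ∑ q : G ⧸ Subgroup.zpowers c, D q.out (χ q.out a) with hψ
  set s₀ : A → Q := fun a => σ a + ((ρ (ψ a) : K) : Q) with hs₀
  -- ζ subtraction lemma for E
  have hζsub : ∀ μ ν : Λ, ζf c hc (μ - ν) = ζf c hc μ - ζf c hc ν := fun μ ν =>
    (ζA c hc).map_sub μ ν
  have hEsub : ∀ v w : (K →₀ Λ), E (v - w) = E v - E w := by
    intro v w
    rw [hE]
    ext k
    simp only [Finsupp.mapRange_apply, Finsupp.sub_apply]
    exact hζsub _ _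
  have hEneg : ∀ v : (K →₀ Λ), E (-v) = - E v := by
    intro v
    rw [hE]
    ext k
    simp only [Finsupp.mapRange_apply, Finsupp.neg_apply]
    exact ζf_neg c hc _
  have hEadd : ∀ v w : (K →₀ Λ), E (v + w) = E v + E w := by
    intro v w
    rw [hE]
    ext k
    simp only [Finsupp.mapRange_apply, Finsupp.add_apply]
    exact ζf_add c hc _ _
  -- the cocycle identity at the level of φ
  have hφcoc : ∀ x t a, uu c x • φ t (uu c x⁻¹ • a) = φ (x * t) a - φ x a := by
    intro x t a
    simp only [hφ, smul_sub, smul_smul, ← uu_mul, ← mul_inv_rev]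
    abel
  have hφKcoc : ∀ x t a, uu c x • φK t (uu c x⁻¹ • a) = φK (x * t) a - φK x a := by
    intro x t a
    apply Subtype.ext
    push_cast
    exact hφcoc x t a
  have hχcoc : ∀ x t a, uu c x • χ t (uu c x⁻¹ • a) = χ (x * t) a - χ x a := by
    intro x t a
    simp only [hχ]
    rw [← map_smul, hφKcoc, map_sub]
  -- coset invariance
  have hφc : ∀ t a, φ (t * c) a = φ t a := by
    intro t a
    simp only [hφ, uu_mul_c, uu_inv_mul_c c hc, neg_smul, map_neg, smul_neg, neg_neg]
  have hχc : ∀ t a, χ (t * c) a = χ t a := by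
    intro t a
    simp only [hχ]
    congr 1
    exact Subtype.ext (hφc t a)
  have hDc : ∀ t v, D (t * c) v = D t v := by
    intro t v
    simp only [hD, uu_mul_c, uu_inv_mul_c c hc, neg_smul, hEneg, smul_neg, neg_neg]
  -- the trace identity
  have htrace : ∀ (r : G ⧸ Subgroup.zpowers c → G),
      (∀ q, (QuotientGroup.mk (r q) : G ⧸ Subgroup.zpowers c) = q) →
      ∀ v : (K →₀ Λ), ∑ q : G ⧸ Subgroup.zpowers c, D (r q) v = v := by
    intro r hr v
    ext k
    rw [Finsupp.finset_sum_apply]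
    have hterm : ∀ q, (D (r q) v) k = uu c (r q) * ζf c hc (uu c (r q)⁻¹ * v k) := by
      intro q
      simp only [hD, hE, Finsupp.smul_apply, Finsupp.mapRange_apply, smul_eq_mul]
    rw [Finset.sum_congr rfl (fun q _ => hterm q)]
    exact KSI c hc hc1 r hr (v k)
  -- equivariance of ψ
  have hψequiv : ∀ x a, uu c x • ψ (uu c x⁻¹ • a) = ψ a - χ x a := by
    intro x a
    rw [hψ, Finset.smul_sum]
    have hterm : ∀ t : G, uu c x • D t (χ t (uu c x⁻¹ • a))
        = D (x * t) (χ (x * t) a) - D (x * t) (χ x a) := by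
      intro t
      have h1 : χ t (uu c x⁻¹ • a) = uu c x⁻¹ • (χ (x * t) a - χ x a) := by
        rw [← hχcoc x t a, uu_inv_smul_smul]
      rw [h1]
      simp only [hD]
      rw [smul_smul (uu c x) (uu c t), ← uu_mul]
      rw [smul_smul (uu c t⁻¹) (uu c x⁻¹), ← uu_mul, ← mul_inv_rev]
      rw [smul_sub, hEsub, smul_sub]
    calc ∑ q : G ⧸ Subgroup.zpowers c, uu c x • D q.out (χ q.out (uu c x⁻¹ • a))
        = ∑ q : G ⧸ Subgroup.zpowers c,
            (D (x * q.out) (χ (x * q.out) a) - D (x * q.out) (χ x a)) := by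
          exact Finset.sum_congr rfl (fun q _ => hterm q.out)
      _ = (∑ q : G ⧸ Subgroup.zpowers c, D (x * q.out) (χ (x * q.out) a))
            - ∑ q : G ⧸ Subgroup.zpowers c, D (x * q.out) (χ x a) :=
          Finset.sum_sub_distrib _ _
      _ = ψ a - χ x a := by
          congr 1
          · -- first sum is ψ a
            rw [hψ]
            apply Fintype.sum_equiv (MulAction.toPerm x)
            intro q
            have hsame : ((x • q : G ⧸ Subgroup.zpowers c).out)⁻¹ * (x * q.out)
                ∈ Subgroup.zpowers c := by
              rw [← QuotientGroup.eq, QuotientGroup.out_eq']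
              rw [show (QuotientGroup.mk (x * q.out) : G ⧸ Subgroup.zpowers c)
                  = x • (QuotientGroup.mk q.out) from rfl, QuotientGroup.out_eq']
            rcases mem_zpowers_eq c hc hsame with h | h
            · have h2 : x * q.out = (x • q : G ⧸ Subgroup.zpowers c).out :=
                (inv_mul_eq_one.mp h).symm
              rw [MulAction.toPerm_apply, h2]
            · have h2 : (x • q : G ⧸ Subgroup.zpowers c).out
                  * (((x • q : G ⧸ Subgroup.zpowers c).out)⁻¹ * (x * q.out))
                  = (x • q : G ⧸ Subgroup.zpowers c).out * c := by rw [h]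
              rw [mul_inv_cancel_left] at h2
              rw [MulAction.toPerm_apply, h2, hDc, hχc]
          · -- second sum is χ x a
            have hsec : ∀ q : G ⧸ Subgroup.zpowers c,
                (QuotientGroup.mk (x * (x⁻¹ • q).out) : G ⧸ Subgroup.zpowers c) = q := by
              intro q
              rw [show (QuotientGroup.mk (x * (x⁻¹ • q).out) : G ⧸ Subgroup.zpowers c)
                  = x • (QuotientGroup.mk (x⁻¹ • q).out) from rfl, QuotientGroup.out_eq',
                smul_inv_smul]
            rw [show (∑ q : G ⧸ Subgroup.zpowers c, D (x * q.out) (χ x a))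
                = ∑ q : G ⧸ Subgroup.zpowers c, D (x * (x⁻¹ • q).out) (χ x a) from
              Fintype.sum_equiv (MulAction.toPerm x) _ _ (fun q => by
                rw [MulAction.toPerm_apply, inv_smul_smul])]
            exact htrace _ hsec (χ x a)
  -- g ∘ s₀ = id
  have hs0g : ∀ a, g (s₀ a) = a := by
    intro a
    rw [hs₀]
    simp only [map_add, hσ]
    have h0 : g ((ρ (ψ a) : K) : Q) = 0 := LinearMap.mem_ker.mp (ρ (ψ a)).2
    rw [h0, add_zero]
  have hs0eqv : ∀ (x : G) (a : A), uu c x • s₀ (uu c x⁻¹ • a) = s₀ a := by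
    intro x a
    rw [hs₀]
    simp only []
    rw [smul_add]
    have h1 : uu c x • σ (uu c x⁻¹ • a) = φ x a + σ a := by
      simp only [hφ]
      abel
    have h3 : uu c x • ρ (ψ (uu c x⁻¹ • a)) = ρ (ψ a) - φK x a := by
      rw [← map_smul, hψequiv, map_sub]
      congr 1
      simp only [hχ]
      exact hι (φK x a)
    have h2 : uu c x • ((ρ (ψ (uu c x⁻¹ • a)) : K) : Q)
        = ((ρ (ψ a) : K) : Q) - φ x a := by
      calc uu c x • ((ρ (ψ (uu c x⁻¹ • a)) : K) : Q)
          = ((uu c x • ρ (ψ (uu c x⁻¹ • a)) : K) : Q) := rfl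
        _ = ((ρ (ψ a) - φK x a : K) : Q) := by rw [h3]
        _ = ((ρ (ψ a) : K) : Q) - φ x a := rfl
    rw [h1, h2]
    abel
  have hs0smul : ∀ (x : G) (a : A), s₀ (uu c x • a) = uu c x • s₀ a := by
    intro x a
    have h := hs0eqv x (uu c x • a)
    rw [uu_inv_smul_smul] at h
    rw [h]
  have hs0add : ∀ a b, s₀ (a + b) = s₀ a + s₀ b := by
    intro a b
    have hχadd : ∀ t, χ t (a + b) = χ t a + χ t b := by
      intro t
      simp only [hχ]
      rw [← map_add]
      congr 1
      apply Subtype.ext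
      push_cast
      show φ t (a + b) = φ t a + φ t b
      simp only [hφ, smul_add, map_add]
      abel
    have hDadd : ∀ t v w, D t (v + w) = D t v + D t w := by
      intro t v w
      simp only [hD]
      rw [smul_add, hEadd, smul_add]
    have hψadd : ψ (a + b) = ψ a + ψ b := by
      rw [hψ]
      simp only []
      rw [← Finset.sum_add_distrib]
      apply Finset.sum_congr rfl
      intro q _
      rw [hχadd, hDadd]
    rw [hs₀]
    simp only []
    rw [hψadd, map_add ρ (ψ a) (ψ b), Submodule.coe_add, map_add]
    abel
  set S : A →+ Q := AddMonoidHom.mk' s₀ hs0add with hS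
  have hsmul : ∀ (μ : Λ) (a : A), s₀ (μ • a) = μ • s₀ a := by
    intro μ a
    obtain ⟨y, rfl⟩ := nmk_surjective c μ
    induction y using MonoidAlgebra.induction_linear with
    | zero => rw [map_zero, zero_smul, zero_smul, show s₀ 0 = 0 from S.map_zero]
    | add u v hu hv =>
        rw [map_add, add_smul, add_smul, hs0add _ _, hu, hv]
    | single t b =>
        have hsb : (MonoidAlgebra.single t b : MonoidAlgebra ℤ G) = b • MonoidAlgebra.single t 1 := by
          rw [MonoidAlgebra.smul_single, smul_eq_mul, mul_one]
        rw [hsb, map_zsmul,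
          show (nmk c (MonoidAlgebra.single t 1) : negGroupRing G c) = uu c t from rfl,
          smul_assoc, show ∀ (n : ℤ) (w : A), s₀ (n • w) = n • s₀ w from
            fun n w => S.map_zsmul n w,
          hs0smul, smul_assoc]
  exact ⟨{ toFun := s₀, map_add' := hs0add, map_smul' := hsmul }, hs0g⟩



end MainSplit

end Test2


open Test2 NegAux in
theorem projective_of_ses_projective_torsionFree
    (G : Type*) [CommGroup G] [Fintype G] (c : G) (hc : c * c = 1) (hc1 : c ≠ 1)
    (P Q A : Type*) [AddCommGroup P] [AddCommGroup Q] [AddCommGroup A]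
    [Module (negGroupRing G c) P] [Module (negGroupRing G c) Q] [Module (negGroupRing G c) A]
    [Module.Projective (negGroupRing G c) P] [Module.Projective (negGroupRing G c) Q]
    [Module.Finite (negGroupRing G c) A]
    (htf : ∀ (n : ℤ) (a : A), n ≠ 0 → n • a = 0 → a = 0)
    (f : P →ₗ[negGroupRing G c] Q) (g : Q →ₗ[negGroupRing G c] A)
    (hf : Function.Injective f) (hg : Function.Surjective g)
    (hfg : LinearMap.range f = LinearMap.ker g) :
    Module.Projective (negGroupRing G c) A := by
  classical
  -- the kernel of g is projective, being isomorphic to P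
  have hKproj : Module.Projective (negGroupRing G c) (LinearMap.ker g) := by
    have e : P ≃ₗ[negGroupRing G c] LinearMap.range f := LinearEquiv.ofInjective f hf
    rw [hfg] at e
    exact Module.Projective.of_equiv e
  -- A is a finite free ℤ-module
  haveI hfinR : Module.Finite ℤ (MonoidAlgebra ℤ G) :=
    Module.Finite.equiv ((Finsupp.linearEquivFunOnFinite ℤ ℤ G).symm ≪≫ₗ
      (MonoidAlgebra.coeffLinearEquiv ℤ).symm)
  haveI hfinΛ : Module.Finite ℤ (negGroupRing G c) :=
    Module.Finite.of_surjective ((nmk (G := G) c).toIntAlgHom.toLinearMap)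
      (nmk_surjective c)
  haveI hfinA : Module.Finite ℤ A := Module.Finite.trans (negGroupRing G c) A
  haveI : NoZeroSMulDivisors ℤ A := by
    constructor
    intro n a h
    by_cases hn : n = 0
    · exact Or.inl hn
    · exact Or.inr (htf n a hn h)
  haveI : Module.Free ℤ A := Module.free_of_finite_type_torsion_free'
  -- choose a ℤ-linear splitting of g
  set b := Module.Free.chooseBasis ℤ A with hb
  set σ0 : A →ₗ[ℤ] Q := Module.Basis.constr b ℤ (fun i => (hg (b i)).choose) with hσ0def
  have hσ0 : ∀ a, g (σ0 a) = a := by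
    have hbi : ∀ i, g (σ0 (b i)) = b i := by
      intro i
      rw [hσ0def, Module.Basis.constr_basis]
      exact (hg (b i)).choose_spec
    have hL : (LinearMap.restrictScalars ℤ g).comp σ0 = LinearMap.id := by
      apply b.ext
      intro i
      simpa using hbi i
    intro a
    calc g (σ0 a) = ((LinearMap.restrictScalars ℤ g).comp σ0) a := rfl
      _ = a := by rw [hL]; rfl
  obtain ⟨s, hs⟩ := main_split c hc hc1 g hKproj σ0.toAddMonoidHom hσ0
  exact Module.Projective.of_split s g (LinearMap.ext hs)

end
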